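/- Identify correlated policies with points of the simplex Δ(Π_det) and assume J^{π̃,k}(μ) is differentiable in π̃. If π̃_crit ∈ Δ(Π_det) satisfies ∇_{π̃^* − π̃_crit} J^{π̃_crit,k}(μ) ≥ 0, where π̃^* is the Dirac distribution at the optimal deterministic policy π_det^* (the minimizer of J^{π_det}(μ) over Π_det), then J^{π̃_crit,k}(μ) − J^{π_det^*}(μ) ≤ 6 γ^k g_max / (1−γ). -/

import Mathlib

open Finset

noncomputable section

variable {S A D : Type*} [Fintype S] [Fintype A] [Fintype D] [DecidableEq S]

/-- Transition matrix of a deterministic policy `pol`. -/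
def detKernel (P : S → A → S → ℝ) (pol : S → A) : Matrix S S ℝ :=
  Matrix.of fun s s' => P s (pol s) s'

/-- Expected discounted cost incurred during the first `k` steps when following the
deterministic policy `pol` starting from state `s`. -/
def detCost (P : S → A → S → ℝ) (g : S → A → ℝ) (γ : ℝ) (pol : S → A) (k : ℕ) (s : S) : ℝ :=
  ∑ t ∈ Finset.range k, γ ^ t * ∑ s', (detKernel P pol ^ t) s s' * g s' (pol s')

/-- Value function `J^{π_det}(s)` of a deterministic policy. -/
def detJ (P : S → A → S → ℝ) (g : S → A → ℝ) (γ : ℝ) (pol : S → A) (s : S) : ℝ :=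
  ∑' t : ℕ, γ ^ t * ∑ s', (detKernel P pol ^ t) s s' * g s' (pol s')

/-- Value `J^{π_det}(μ)` of a deterministic policy from an initial distribution `μ`. -/
def detJInit (P : S → A → S → ℝ) (g : S → A → ℝ) (γ : ℝ) (pol : S → A) (μ : S → ℝ) : ℝ :=
  ∑ s, μ s * detJ P g γ pol s

/-- The `k`-step transition kernel of the correlated policy with weights `w`
over the family `p` of deterministic policies. -/
def corKernel (P : S → A → S → ℝ) (p : D → S → A) (w : D → ℝ) (k : ℕ) : Matrix S S ℝ :=
  ∑ d, w d • (detKernel P (p d) ^ k)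

/-- Expected discounted cost of one `k`-step block of the correlated policy from `s`. -/
def blockCost (P : S → A → S → ℝ) (g : S → A → ℝ) (γ : ℝ) (p : D → S → A) (w : D → ℝ)
    (k : ℕ) (s : S) : ℝ :=
  ∑ d, w d * detCost P g γ (p d) k s

/-- The `k`-step value function `J^{π̃,k}(s)` of the correlated policy `w`. -/
def Jk (P : S → A → S → ℝ) (g : S → A → ℝ) (γ : ℝ) (p : D → S → A) (w : D → ℝ)
    (k : ℕ) (s : S) : ℝ :=
  ∑' m : ℕ, γ ^ (m * k) * ∑ s', (corKernel P p w k ^ m) s s' * blockCost P g γ p w k s'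

/-- `J^{π̃,k}(μ)`. -/
def JkInit (P : S → A → S → ℝ) (g : S → A → ℝ) (γ : ℝ) (p : D → S → A) (w : D → ℝ)
    (k : ℕ) (μ : S → ℝ) : ℝ :=
  ∑ s, μ s * Jk P g γ p w k s

/-- The `k`-step Q-function `Q^{π̃,k}(s, π')` with deterministic second argument `pol`. -/
def Qk (P : S → A → S → ℝ) (g : S → A → ℝ) (γ : ℝ) (p : D → S → A) (w : D → ℝ)
    (k : ℕ) (s : S) (pol : S → A) : ℝ :=
  detCost P g γ pol k s + γ ^ k * ∑ s', (detKernel P pol ^ k) s s' * Jk P g γ p w k s'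

/-- The `k`-step Q-function `Q^{π̃,k}(s, π̃')` with correlated second argument `w'`. -/
def QkCor (P : S → A → S → ℝ) (g : S → A → ℝ) (γ : ℝ) (p : D → S → A) (w : D → ℝ)
    (k : ℕ) (s : S) (w' : D → ℝ) : ℝ :=
  ∑ d, w' d * Qk P g γ p w k s (p d)

/-- The `k`-step discounted state occupancy measure `d_μ^{π̃,k}(s)`. -/
def dOcc (P : S → A → S → ℝ) (γ : ℝ) (p : D → S → A) (w : D → ℝ) (k : ℕ)
    (μ : S → ℝ) (s : S) : ℝ :=
  (1 - γ ^ k) * ∑' m : ℕ, γ ^ (m * k) * ∑ s0, μ s0 * (corKernel P p w k ^ m) s0 s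

/-!
Write `β = γ^k`, `M` for the `k`-step kernel of `π̃_crit`, `K` for the `k`-step kernel of
`π_det^*`, `J` and `J*` for their values, and `R = (1 - β M)⁻¹`, so that `J = R c` with `c` the
block cost. Since `M` and `c` are linear in the weights, differentiating `R c` gives the policy
gradient `μᵀ R Q(·, u)`; towards the Dirac weight the hypothesis reads
`μᵀ R (Q(·, π_det^*) - J) ≥ 0`.
By the Bellman equation of `J*`, `Q(·, π_det^*) - J = -(1 - β K)(J - J*)`, and
`R (1 - β K) = 1 - β R (K - M)`, hence `μᵀ (J - J*) ≤ β μᵀ R (K - M)(J - J*) ≤ 4 β B / (1 - β)`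
with `B = g_max / (1 - γ)`, because `(1 - β) R` is row-stochastic. Together with the trivial
bound `2 B` this gives `6 β B`.
-/

open Matrix

attribute [local instance] Matrix.linftyOpNormedAddCommGroup Matrix.linftyOpNormedRing
  Matrix.linftyOpNormedAlgebra

section Stochastic

variable {ι n : Type*} [Fintype ι] [Fintype n] [DecidableEq n]

lemma abs_dotProduct_le_sum_mul {x y : ι → ℝ} {Y : ℝ} (hx : 0 ≤ x) (hy : ∀ i, |y i| ≤ Y) :
    |x ⬝ᵥ y| ≤ (∑ i, x i) * Y := by
  calc |x ⬝ᵥ y| ≤ ∑ i, |x i * y i| := Finset.abs_sum_le_sum_abs _ _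
    _ ≤ ∑ i, x i * Y := by
      gcongr with i
      rw [abs_mul, abs_of_nonneg (hx i)]
      exact mul_le_mul_of_nonneg_left (hy i) (hx i)
    _ = (∑ i, x i) * Y := (Finset.sum_mul ..).symm

lemma abs_dotProduct_le_of_mem_stdSimplex {x y : ι → ℝ} {Y : ℝ} (hx : x ∈ stdSimplex ℝ ι)
    (hy : ∀ i, |y i| ≤ Y) : |x ⬝ᵥ y| ≤ Y := by
  simpa [hx.2] using abs_dotProduct_le_sum_mul hx.1 hy

lemma abs_mulVec_le_of_mem_rowStochastic {M : Matrix n n ℝ} (hM : M ∈ rowStochastic ℝ n)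
    {y : n → ℝ} {Y : ℝ} (hy : ∀ i, |y i| ≤ Y) (i : n) : |(M *ᵥ y) i| ≤ Y :=
  abs_dotProduct_le_of_mem_stdSimplex ⟨fun j => hM.1 i j, sum_row_of_mem_rowStochastic hM i⟩ hy

lemma norm_le_one_of_mem_rowStochastic {M : Matrix n n ℝ} (hM : M ∈ rowStochastic ℝ n) :
    ‖M‖ ≤ 1 := by
  rw [linfty_opNorm_def, NNReal.coe_le_one]
  refine Finset.sup_le fun i _ => ?_
  rw [← NNReal.coe_le_one]
  push_cast
  simp_rw [Real.norm_of_nonneg (hM.1 i _), sum_row_of_mem_rowStochastic hM i, le_refl]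

lemma norm_smul_lt_one_of_mem_rowStochastic {M : Matrix n n ℝ} (hM : M ∈ rowStochastic ℝ n)
    {β : ℝ} (hβ0 : 0 ≤ β) (hβ1 : β < 1) : ‖β • M‖ < 1 :=
  calc ‖β • M‖ ≤ β * 1 := by
        rw [norm_smul, Real.norm_of_nonneg hβ0]; gcongr; exact norm_le_one_of_mem_rowStochastic hM
    _ < 1 := by linarith

end Stochastic

section InverseOneSub

variable {n : Type*} [Fintype n] [DecidableEq n]

lemma Ring.inverse_one_sub_eq_geom_sum_add {R : Type*} [Ring R] {x : R} (hx : IsUnit (1 - x))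
    (k : ℕ) :
    Ring.inverse (1 - x) = ∑ t ∈ Finset.range k, x ^ t + x ^ k * Ring.inverse (1 - x) := by
  have h := congrArg (· * Ring.inverse (1 - x)) (geom_sum_mul_neg x k)
  simp only [mul_assoc, Ring.mul_inverse_cancel _ hx, mul_one, sub_mul, one_mul] at h
  rw [h]; abel

lemma hasSum_pow_apply_inverse_one_sub {x : Matrix n n ℝ} (hx : ‖x‖ < 1) (i j : n) :
    HasSum (fun m => (x ^ m) i j) (Ring.inverse (1 - x) i j) :=
  Pi.hasSum.mp (Pi.hasSum.mp (hasSum_geom_series_inverse x hx) i) j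

lemma hasSum_pow_mulVec_inverse_one_sub {x : Matrix n n ℝ} (hx : ‖x‖ < 1) (c : n → ℝ) (i : n) :
    HasSum (fun m => (x ^ m *ᵥ c) i) ((Ring.inverse (1 - x) *ᵥ c) i) :=
  hasSum_sum fun j _ => (hasSum_pow_apply_inverse_one_sub hx i j).mul_right (c j)

lemma pow_smul_mulVec_apply (β : ℝ) (M : Matrix n n ℝ) (c : n → ℝ) (t : ℕ) (s : n) :
    ((β • M) ^ t *ᵥ c) s = β ^ t * ∑ s', (M ^ t) s s' * c s' := by
  rw [smul_pow, smul_mulVec]; rfl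

variable {M : Matrix n n ℝ} {β : ℝ}

lemma inverse_one_sub_smul_apply_nonneg (hM : M ∈ rowStochastic ℝ n) (hβ0 : 0 ≤ β)
    (hβ1 : β < 1) (i j : n) : 0 ≤ Ring.inverse (1 - β • M) i j :=
  (hasSum_pow_apply_inverse_one_sub (norm_smul_lt_one_of_mem_rowStochastic hM hβ0 hβ1) i j).nonneg
    fun m => by rw [smul_pow]; exact mul_nonneg (pow_nonneg hβ0 m) ((pow_mem hM m).1 i j)

lemma inverse_one_sub_smul_mulVec_one (hM : M ∈ rowStochastic ℝ n) (hβ : IsUnit (1 - β • M))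
    (hβ1 : β ≠ 1) : Ring.inverse (1 - β • M) *ᵥ 1 = (1 - β)⁻¹ • 1 := by
  have h : (1 - β • M) *ᵥ 1 = (1 - β) • (1 : n → ℝ) := by
    rw [sub_mulVec, smul_mulVec, one_mulVec, hM.2, sub_smul, one_smul]
  have h' := congrArg (Ring.inverse (1 - β • M) *ᵥ ·) h
  simp only [mulVec_mulVec, Ring.inverse_mul_cancel _ hβ, one_mulVec, mulVec_smul] at h'
  exact (eq_inv_smul_iff₀ (sub_ne_zero.mpr hβ1.symm)).mpr h'.symm

lemma abs_inverse_one_sub_smul_mulVec_le (hM : M ∈ rowStochastic ℝ n) (hβ0 : 0 ≤ β) (hβ1 : β < 1)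
    {y : n → ℝ} {Y : ℝ} (hy : ∀ i, |y i| ≤ Y) (i : n) :
    |(Ring.inverse (1 - β • M) *ᵥ y) i| ≤ (1 - β)⁻¹ * Y := by
  have hrow := congrFun (inverse_one_sub_smul_mulVec_one hM (isUnit_one_sub_of_norm_lt_one
    (norm_smul_lt_one_of_mem_rowStochastic hM hβ0 hβ1)) hβ1.ne) i
  simp only [mulVec, dotProduct_one, Pi.smul_apply, Pi.one_apply, smul_eq_mul, mul_one] at hrow
  rw [← hrow]
  exact abs_dotProduct_le_sum_mul (fun j => inverse_one_sub_smul_apply_nonneg hM hβ0 hβ1 i j) hy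

end InverseOneSub

section ValueGap

variable {n : Type*} [Fintype n] [DecidableEq n]

lemma mulVec_bellman_residual_eq {α : Type*} [CommRing α]
    {R M K : Matrix n n α} {β : α} (hR : R * (1 - β • M) = 1) {J J' c : n → α}
    (hJ' : J' = c + β • K *ᵥ J') :
    R *ᵥ (c + β • K *ᵥ J - J) = β • R *ᵥ ((K - M) *ᵥ (J - J')) - (J - J') := by
  have h : c + β • K *ᵥ J - J = β • (K - M) *ᵥ (J - J') - (1 - β • M) *ᵥ (J - J') := by
    rw [eq_sub_of_add_eq hJ'.symm]
    simp only [sub_mulVec, mulVec_sub, smul_mulVec, one_mulVec, smul_sub]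
    abel
  rw [h, mulVec_sub, mulVec_mulVec, hR, one_mulVec, mulVec_smul]

theorem dotProduct_sub_le_of_bellman_residual_nonneg {M K : Matrix n n ℝ}
    (hM : M ∈ rowStochastic ℝ n) (hK : K ∈ rowStochastic ℝ n) {β : ℝ} (hβ0 : 0 ≤ β) (hβ1 : β < 1)
    {μ : n → ℝ} (hμ : μ ∈ stdSimplex ℝ n) {J J' c : n → ℝ} {B : ℝ} (hJ : ∀ s, |J s| ≤ B)
    (hJ' : ∀ s, |J' s| ≤ B) (hbell : J' = c + β • K *ᵥ J')
    (hres : 0 ≤ μ ⬝ᵥ (Ring.inverse (1 - β • M) *ᵥ (c + β • K *ᵥ J - J))) :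
    μ ⬝ᵥ (J - J') ≤ 6 * β * B := by
  have hR : Ring.inverse (1 - β • M) * (1 - β • M) = 1 := Ring.inverse_mul_cancel _
    (isUnit_one_sub_of_norm_lt_one (norm_smul_lt_one_of_mem_rowStochastic hM hβ0 hβ1))
  rw [mulVec_bellman_residual_eq hR hbell, dotProduct_sub, dotProduct_smul, smul_eq_mul,
    sub_nonneg] at hres
  have hgap : ∀ s, |(J - J') s| ≤ 2 * B := fun s =>
    (abs_sub _ _).trans (by linarith [hJ s, hJ' s])
  have hKM : ∀ s, |((K - M) *ᵥ (J - J')) s| ≤ 4 * B := fun s => by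
    rw [sub_mulVec]
    exact (abs_sub _ _).trans (by linarith [abs_mulVec_le_of_mem_rowStochastic hK hgap s,
      abs_mulVec_le_of_mem_rowStochastic hM hgap s])
  have htrivial := abs_le.mp (abs_dotProduct_le_of_mem_stdSimplex hμ hgap)
  have hcorrection := abs_le.mp
    (abs_dotProduct_le_of_mem_stdSimplex hμ (abs_inverse_one_sub_smul_mulVec_le hM hβ0 hβ1 hKM))
  -- `4 β B / (1 - β) ≤ 6 β B` exactly when `β ≤ 1/3`; beyond that the trivial bound `2 B` wins.
  rcases le_or_gt β (1 / 3) with hsmall | hlarge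
  · have hcoef : (1 - β)⁻¹ * (4 * B) ≤ 6 * B := by
      rw [inv_mul_le_iff₀ (by linarith)]; nlinarith
    nlinarith
  · nlinarith

end ValueGap

section Derivative

variable {n E : Type*} [Fintype n] [DecidableEq n] [NormedAddCommGroup E] [NormedSpace ℝ E]

def dotProductMulVecCLM (μ : n → ℝ) : Matrix n n ℝ →L[ℝ] (n → ℝ) →L[ℝ] ℝ :=
  LinearMap.toContinuousLinearMap
    (LinearMap.toContinuousLinearMap.toLinearMap ∘ₗ
      (mulVecBilin ℝ ℝ).compr₂ (dotProductBilin ℝ ℝ μ))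

lemma fderiv_dotProduct_inverse_one_sub_mulVec (μ : n → ℝ) (M : E →L[ℝ] Matrix n n ℝ)
    (c : E →L[ℝ] n → ℝ) {w : E} (hw : IsUnit (1 - M w)) (u : E) :
    fderiv ℝ (fun v => μ ⬝ᵥ (Ring.inverse (1 - M v) *ᵥ c v)) w u =
      μ ⬝ᵥ (Ring.inverse (1 - M w) *ᵥ (c u + M u *ᵥ (Ring.inverse (1 - M w) *ᵥ c w))) := by
  obtain ⟨x, hx⟩ := hw
  have hinv : HasFDerivAt (fun v => Ring.inverse (1 - M v))
      ((-ContinuousLinearMap.mulLeftRight ℝ _ ↑x⁻¹ ↑x⁻¹).comp (-M)) w := by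
    have := hasFDerivAt_ringInverse (𝕜 := ℝ) x
    rw [hx] at this
    exact this.comp w (M.hasFDerivAt.const_sub 1)
  have hF : HasFDerivAt (fun v => μ ⬝ᵥ (Ring.inverse (1 - M v) *ᵥ c v)) _ w :=
    (dotProductMulVecCLM μ).hasFDerivAt_of_bilinear hinv c.hasFDerivAt
  have hR : Ring.inverse (1 - M w) = ↑x⁻¹ := by rw [← hx, Ring.inverse_unit]
  set R : Matrix n n ℝ := ↑x⁻¹
  rw [hF.fderiv, hR]
  change μ ⬝ᵥ (R *ᵥ c u) + μ ⬝ᵥ (-(R * -M u * R) *ᵥ c w) = _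
  rw [mul_neg, neg_mul, neg_neg, ← mulVec_mulVec, ← mulVec_mulVec, ← dotProduct_add,
    ← mulVec_add]

end Derivative

section MDP

omit [Fintype A]

variable {P : S → A → S → ℝ} {g : S → A → ℝ} {γ gmax : ℝ} {p : D → S → A} {k : ℕ}

lemma detKernel_mem_rowStochastic (hP : ∀ s a, (∀ s', 0 ≤ P s a s') ∧ ∑ s', P s a s' = 1)
    (pol : S → A) : detKernel P pol ∈ rowStochastic ℝ S :=
  mem_rowStochastic_iff_sum.mpr ⟨fun s s' => (hP s (pol s)).1 s', fun s => (hP s (pol s)).2⟩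

lemma corKernel_mem_rowStochastic (hP : ∀ s a, (∀ s', 0 ≤ P s a s') ∧ ∑ s', P s a s' = 1)
    {w : D → ℝ} (hw : w ∈ stdSimplex ℝ D) (k : ℕ) : corKernel P p w k ∈ rowStochastic ℝ S :=
  convex_rowStochastic.sum_mem (fun d _ => hw.1 d) hw.2
    fun d _ => pow_mem (detKernel_mem_rowStochastic hP (p d)) k

lemma detCost_eq_geom_sum_mulVec (pol : S → A) (k : ℕ) :
    detCost P g γ pol k =
      (∑ t ∈ Finset.range k, (γ • detKernel P pol) ^ t) *ᵥ fun s => g s (pol s) := by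
  funext s
  simp only [detCost, sum_mulVec, Finset.sum_apply, pow_smul_mulVec_apply]

lemma detJ_eq_inverse_mulVec (hP : ∀ s a, (∀ s', 0 ≤ P s a s') ∧ ∑ s', P s a s' = 1)
    (hγ0 : 0 ≤ γ) (hγ1 : γ < 1) (pol : S → A) :
    detJ P g γ pol = Ring.inverse (1 - γ • detKernel P pol) *ᵥ fun s => g s (pol s) := by
  funext s
  simp only [detJ, ← pow_smul_mulVec_apply]
  exact (hasSum_pow_mulVec_inverse_one_sub (norm_smul_lt_one_of_mem_rowStochastic
    (detKernel_mem_rowStochastic hP pol) hγ0 hγ1) _ s).tsum_eq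

lemma detJ_bellman (hP : ∀ s a, (∀ s', 0 ≤ P s a s') ∧ ∑ s', P s a s' = 1)
    (hγ0 : 0 ≤ γ) (hγ1 : γ < 1) (pol : S → A) (k : ℕ) :
    detJ P g γ pol = detCost P g γ pol k + γ ^ k • (detKernel P pol ^ k *ᵥ detJ P g γ pol) := by
  have hK := norm_smul_lt_one_of_mem_rowStochastic (detKernel_mem_rowStochastic hP pol) hγ0 hγ1
  rw [detCost_eq_geom_sum_mulVec, detJ_eq_inverse_mulVec hP hγ0 hγ1]
  conv_lhs => rw [Ring.inverse_one_sub_eq_geom_sum_add (isUnit_one_sub_of_norm_lt_one hK) k]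
  rw [add_mulVec, smul_pow, smul_mul_assoc, smul_mulVec, mulVec_mulVec]

lemma Jk_eq_inverse_mulVec {w : D → ℝ} (hw : ‖γ ^ k • corKernel P p w k‖ < 1) :
    Jk P g γ p w k = Ring.inverse (1 - γ ^ k • corKernel P p w k) *ᵥ blockCost P g γ p w k := by
  funext s
  simp only [Jk, pow_mul', ← pow_smul_mulVec_apply]
  exact (hasSum_pow_mulVec_inverse_one_sub hw _ s).tsum_eq

lemma abs_detCost_le (hP : ∀ s a, (∀ s', 0 ≤ P s a s') ∧ ∑ s', P s a s' = 1)
    (hg : ∀ s a, |g s a| ≤ gmax) (hγ0 : 0 ≤ γ) (hγ1 : γ < 1) (pol : S → A) (k : ℕ) (s : S) :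
    |detCost P g γ pol k s| ≤ (1 - γ ^ k) / (1 - γ) * gmax :=
  calc |detCost P g γ pol k s|
      ≤ ∑ t ∈ Finset.range k, |γ ^ t * (detKernel P pol ^ t *ᵥ fun s => g s (pol s)) s| :=
        Finset.abs_sum_le_sum_abs _ _
    _ ≤ ∑ t ∈ Finset.range k, γ ^ t * gmax := by
        gcongr with t
        rw [abs_mul, abs_of_nonneg (pow_nonneg hγ0 t)]
        gcongr
        exact abs_mulVec_le_of_mem_rowStochastic
          (pow_mem (detKernel_mem_rowStochastic hP pol) t) (fun s => hg s (pol s)) s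
    _ = (1 - γ ^ k) / (1 - γ) * gmax := by
        rw [← Finset.sum_mul, geom_sum_eq hγ1.ne, ← neg_div_neg_eq, neg_sub, neg_sub]

lemma abs_Jk_le (hP : ∀ s a, (∀ s', 0 ≤ P s a s') ∧ ∑ s', P s a s' = 1)
    (hg : ∀ s a, |g s a| ≤ gmax) (hγ0 : 0 ≤ γ) (hγ1 : γ < 1) (hk : k ≠ 0)
    {w : D → ℝ} (hw : w ∈ stdSimplex ℝ D) (s : S) : |Jk P g γ p w k s| ≤ gmax / (1 - γ) := by
  have hM := corKernel_mem_rowStochastic (p := p) hP hw k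
  have hγk0 : 0 ≤ γ ^ k := pow_nonneg hγ0 k
  have hγk1 : γ ^ k < 1 := pow_lt_one₀ hγ0 hγ1 hk
  rw [Jk_eq_inverse_mulVec (norm_smul_lt_one_of_mem_rowStochastic hM hγk0 hγk1)]
  refine (abs_inverse_one_sub_smul_mulVec_le hM hγk0 hγk1 (fun s =>
    abs_dotProduct_le_of_mem_stdSimplex hw fun d => abs_detCost_le hP hg hγ0 hγ1 (p d) k s) s).trans
    (le_of_eq ?_)
  field_simp [(by linarith : 1 - γ ^ k ≠ 0)]

lemma abs_detJ_le (hP : ∀ s a, (∀ s', 0 ≤ P s a s') ∧ ∑ s', P s a s' = 1)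
    (hg : ∀ s a, |g s a| ≤ gmax) (hγ0 : 0 ≤ γ) (hγ1 : γ < 1) (pol : S → A) (s : S) :
    |detJ P g γ pol s| ≤ gmax / (1 - γ) := by
  rw [detJ_eq_inverse_mulVec hP hγ0 hγ1, div_eq_inv_mul]
  exact abs_inverse_one_sub_smul_mulVec_le (detKernel_mem_rowStochastic hP pol) hγ0 hγ1
    (fun s => hg s (pol s)) s

end MDP

section Gradient

omit [Fintype A]

variable {P : S → A → S → ℝ} {g : S → A → ℝ} {γ : ℝ} {p : D → S → A} {k : ℕ}

lemma Jk_bellman {w : D → ℝ} (hw : ‖γ ^ k • corKernel P p w k‖ < 1) :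
    Jk P g γ p w k = blockCost P g γ p w k + γ ^ k • (corKernel P p w k *ᵥ Jk P g γ p w k) := by
  rw [Jk_eq_inverse_mulVec hw]
  conv_lhs => rw [Ring.inverse_one_sub_eq_geom_sum_add (isUnit_one_sub_of_norm_lt_one hw) 1]
  simp only [Finset.sum_range_one, pow_zero, pow_one, add_mulVec, one_mulVec, ← mulVec_mulVec,
    smul_mulVec]

lemma QkCor_eq (w u : D → ℝ) :
    (fun s => QkCor P g γ p w k s u) =
      blockCost P g γ p u k + γ ^ k • (corKernel P p u k *ᵥ Jk P g γ p w k) := by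
  funext s
  simp [QkCor, Qk, blockCost, corKernel, sum_mulVec, smul_mulVec, mul_add, Finset.sum_add_distrib,
    Finset.mul_sum, mul_left_comm, mulVec, dotProduct]

lemma QkCor_dirac_sub_self [DecidableEq D] {w : D → ℝ} (hw : ‖γ ^ k • corKernel P p w k‖ < 1)
    (d₀ : D) :
    (fun s => QkCor P g γ p w k s ((fun d => if d = d₀ then 1 else 0) - w)) =
      detCost P g γ (p d₀) k + γ ^ k • (detKernel P (p d₀) ^ k *ᵥ Jk P g γ p w k) -
        Jk P g γ p w k := by
  have hself : (fun s => QkCor P g γ p w k s w) = Jk P g γ p w k := by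
    rw [QkCor_eq, ← Jk_bellman hw]
  funext s
  rw [Pi.sub_apply, ← congrFun hself s]
  simp only [QkCor, Pi.sub_apply, sub_mul, ite_mul, one_mul, zero_mul, Finset.sum_sub_distrib,
    Finset.sum_ite_eq', Finset.mem_univ, ↓reduceIte, Pi.add_apply, Pi.smul_apply, smul_eq_mul,
    sub_left_inj]
  rfl

theorem fderiv_JkInit_apply (hP : ∀ s a, (∀ s', 0 ≤ P s a s') ∧ ∑ s', P s a s' = 1)
    (hγ0 : 0 ≤ γ) (hγ1 : γ < 1) (hk : k ≠ 0) {w : D → ℝ} (hw : w ∈ stdSimplex ℝ D) (μ : S → ℝ)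
    (u : D → ℝ) :
    fderiv ℝ (fun v => JkInit P g γ p v k μ) w u =
      μ ⬝ᵥ (Ring.inverse (1 - γ ^ k • corKernel P p w k) *ᵥ fun s => QkCor P g γ p w k s u) := by
  let M : (D → ℝ) →L[ℝ] Matrix S S ℝ := γ ^ k •
    LinearMap.toContinuousLinearMap (Fintype.linearCombination ℝ fun d => detKernel P (p d) ^ k)
  let c : (D → ℝ) →L[ℝ] S → ℝ :=
    LinearMap.toContinuousLinearMap (Fintype.linearCombination ℝ fun d => detCost P g γ (p d) k)
  have hM : ∀ v, M v = γ ^ k • corKernel P p v k := fun v => by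
    simp [M, corKernel, Fintype.linearCombination_apply]
  have hc : ∀ v, c v = blockCost P g γ p v k := fun v => by
    funext s; simp [c, blockCost, Fintype.linearCombination_apply, Finset.sum_apply]
  have hw1 : ‖M w‖ < 1 := hM w ▸ norm_smul_lt_one_of_mem_rowStochastic
    (corKernel_mem_rowStochastic hP hw k) (pow_nonneg hγ0 k) (pow_lt_one₀ hγ0 hγ1 hk)
  have hev : (fun v => JkInit P g γ p v k μ) =ᶠ[nhds w]
      fun v => μ ⬝ᵥ (Ring.inverse (1 - M v) *ᵥ c v) := by
    filter_upwards [(isOpen_lt M.continuous.norm continuous_const).mem_nhds hw1] with v hv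
    rw [hM] at hv ⊢
    rw [hc, ← Jk_eq_inverse_mulVec hv]
    rfl
  rw [hev.fderiv_eq, fderiv_dotProduct_inverse_one_sub_mulVec μ M c
    (isUnit_one_sub_of_norm_lt_one hw1) u, hM, hM, hc, hc, ← Jk_eq_inverse_mulVec (hM w ▸ hw1),
    QkCor_eq, smul_mulVec]

end Gradient

theorem nonneg_directional_derivative_near_optimal_general
    [DecidableEq D]
    (P : S → A → S → ℝ) (g : S → A → ℝ) (γ gmax : ℝ) (μ : S → ℝ)
    (p : D → S → A) (k : ℕ) (wcrit : D → ℝ) (dstar : D)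
    (hP : ∀ s a, (∀ s', 0 ≤ P s a s') ∧ ∑ s', P s a s' = 1)
    (hg : ∀ s a, |g s a| ≤ gmax)
    (hγ0 : 0 < γ) (hγ1 : γ < 1)
    (hμ : μ ∈ stdSimplex ℝ S)
    (hk : 1 ≤ k)
    (hwcrit : wcrit ∈ stdSimplex ℝ D)
    (hdir : 0 ≤ fderiv ℝ (fun v : D → ℝ => JkInit P g γ p v k μ) wcrit
      ((fun d => if d = dstar then 1 else 0) - wcrit)) :
    JkInit P g γ p wcrit k μ - detJInit P g γ (p dstar) μ ≤
      6 * γ ^ k * gmax / (1 - γ) := by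
  have hk0 : k ≠ 0 := Nat.one_le_iff_ne_zero.mp hk
  have hβ0 : 0 ≤ γ ^ k := pow_nonneg hγ0.le k
  have hβ1 : γ ^ k < 1 := pow_lt_one₀ hγ0.le hγ1 hk0
  have hM := corKernel_mem_rowStochastic (p := p) hP hwcrit k
  rw [fderiv_JkInit_apply hP hγ0.le hγ1 hk0 hwcrit,
    QkCor_dirac_sub_self (norm_smul_lt_one_of_mem_rowStochastic hM hβ0 hβ1)] at hdir
  have hgap := dotProduct_sub_le_of_bellman_residual_nonneg hM
    (pow_mem (detKernel_mem_rowStochastic hP (p dstar)) k) hβ0 hβ1 hμ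
    (abs_Jk_le hP hg hγ0.le hγ1 hk0 hwcrit) (abs_detJ_le hP hg hγ0.le hγ1 (p dstar))
    (detJ_bellman hP hγ0.le hγ1 (p dstar) k) hdir
  calc JkInit P g γ p wcrit k μ - detJInit P g γ (p dstar) μ
      = μ ⬝ᵥ (Jk P g γ p wcrit k - detJ P g γ (p dstar)) := by
        simp only [JkInit, detJInit, dotProduct, Pi.sub_apply, mul_sub, Finset.sum_sub_distrib]
    _ ≤ 6 * γ ^ k * (gmax / (1 - γ)) := hgap
    _ = 6 * γ ^ k * gmax / (1 - γ) := (mul_div_assoc ..).symm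

/-- If the directional derivative of the `k`-step objective at `π̃_crit` towards the
Dirac distribution `π̃^*` at the optimal deterministic policy is nonnegative, then
`J^{π̃_crit,k}(μ) − J^{π_det^*}(μ) ≤ 6 γ^k g_max / (1−γ)`. -/
theorem nonneg_directional_derivative_near_optimal
    [DecidableEq D]
    (P : S → A → S → ℝ) (g : S → A → ℝ) (γ gmax : ℝ) (μ : S → ℝ)
    (p : D → S → A) (k : ℕ) (wcrit : D → ℝ) (dstar : D)
    (hP : ∀ s a, (∀ s', 0 ≤ P s a s') ∧ ∑ s', P s a s' = 1)
    (hg : ∀ s a, |g s a| ≤ gmax)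
    (hγ0 : 0 < γ) (hγ1 : γ < 1)
    (hμ : μ ∈ stdSimplex ℝ S)
    (hk : 1 ≤ k)
    (hwcrit : wcrit ∈ stdSimplex ℝ D)
    (hstar : ∀ d, detJInit P g γ (p dstar) μ ≤ detJInit P g γ (p d) μ)
    (hdiff : DifferentiableAt ℝ (fun v : D → ℝ => JkInit P g γ p v k μ) wcrit)
    (hdir : 0 ≤ fderiv ℝ (fun v : D → ℝ => JkInit P g γ p v k μ) wcrit
      ((fun d => if d = dstar then 1 else 0) - wcrit)) :
    JkInit P g γ p wcrit k μ - detJInit P g γ (p dstar) μ ≤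
      6 * γ ^ k * gmax / (1 - γ) :=
  nonneg_directional_derivative_near_optimal_general P g γ gmax μ p k wcrit dstar hP hg hγ0 hγ1 hμ
    hk hwcrit hdir
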